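/- arXiv:2001.01017 — 2 statements merged into one kernel-verified Lean document; each statement's English description precedes it below -/
import Mathlib

section
/- Let Σ be a d×d real positive semi-definite matrix with eigenvalues λ_1 > λ_2 ≥ ... ≥ λ_d ≥ 0 and top eigenvector q*. For any nonzero v ∈ R^d, define Ψ := 1 − (vᵀq*)²/‖v‖². Then (vᵀΣ²v)/‖v‖² − ((vᵀΣv)/‖v‖²)² ≤ Ψ·((1−Ψ)λ_1² + λ_2²) ≤ 2λ_1²·Ψ. -/
open Matrix

section RayleighAux
open Finset

private lemma vecMulVec_mulVec' {d : ℕ} (w u x : Fin d → ℝ) :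
    (vecMulVec w u).mulVec x = (u ⬝ᵥ x) • w := by
  ext i
  simp only [vecMulVec, mulVec, dotProduct, of_apply, Pi.smul_apply, smul_eq_mul,
    Finset.sum_mul]
  exact Finset.sum_congr rfl fun j _ => by ring

private lemma sum_mulVec' {d : ℕ} (A : Fin d → Matrix (Fin d) (Fin d) ℝ) (x : Fin d → ℝ) :
    (∑ i, A i).mulVec x = ∑ i, (A i).mulVec x :=
  map_sum (Matrix.mulVec.addMonoidHomLeft x) A Finset.univ

private lemma dotProduct_sum'' {d : ℕ} (v : Fin d → ℝ) (f : Fin d → (Fin d → ℝ)) :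
    v ⬝ᵥ (∑ i, f i) = ∑ i, v ⬝ᵥ f i := by
  simp only [dotProduct, Finset.sum_apply, Finset.mul_sum]
  exact Finset.sum_comm

private lemma rayleigh_aux {d : ℕ}
    (Sg : Matrix (Fin d) (Fin d) ℝ)
    (lam : Fin d → ℝ) (q : Fin d → (Fin d → ℝ))
    (horth : ∀ i j, q i ⬝ᵥ q j = if i = j then (1 : ℝ) else 0)
    (hdecomp : Sg = ∑ i, lam i • vecMulVec (q i) (q i))
    (hantitone : Antitone lam)
    (hnonneg : ∀ i, 0 ≤ lam i)
    (v : Fin d → ℝ) (hv : v ≠ 0)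
    (i0 i1 : Fin d) (h0 : (i0 : ℕ) = 0) (h1 : (i1 : ℕ) = 1)
    (hgap : lam i1 < lam i0) :
    (v ⬝ᵥ (Sg * Sg).mulVec v) / (v ⬝ᵥ v) - ((v ⬝ᵥ Sg.mulVec v) / (v ⬝ᵥ v)) ^ 2 ≤
      (1 - (v ⬝ᵥ q i0) ^ 2 / (v ⬝ᵥ v)) *
        ((1 - (1 - (v ⬝ᵥ q i0) ^ 2 / (v ⬝ᵥ v))) * lam i0 ^ 2 + lam i1 ^ 2) ∧
    (1 - (v ⬝ᵥ q i0) ^ 2 / (v ⬝ᵥ v)) *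
        ((1 - (1 - (v ⬝ᵥ q i0) ^ 2 / (v ⬝ᵥ v))) * lam i0 ^ 2 + lam i1 ^ 2) ≤
      2 * lam i0 ^ 2 * (1 - (v ⬝ᵥ q i0) ^ 2 / (v ⬝ᵥ v)) := by
  set a : Fin d → ℝ := fun i => v ⬝ᵥ q i with ha
  have hSx : ∀ x : Fin d → ℝ, Sg.mulVec x = ∑ i, (lam i * (q i ⬝ᵥ x)) • q i := by
    intro x
    rw [hdecomp, sum_mulVec']
    refine Finset.sum_congr rfl fun i _ => ?_
    rw [smul_mulVec, vecMulVec_mulVec', smul_smul]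
  have hSq : ∀ j, Sg.mulVec (q j) = lam j • q j := by
    intro j
    rw [hSx]
    have he : ∀ i, (lam i * (q i ⬝ᵥ q j)) • q i
        = if i = j then lam j • q j else 0 := by
      intro i
      rw [horth]
      by_cases h : i = j <;> simp [h]
    simp only [he]
    simp
  have h1s : v ⬝ᵥ Sg.mulVec v = ∑ i, lam i * a i ^ 2 := by
    rw [hSx, dotProduct_sum'']
    refine Finset.sum_congr rfl fun i _ => ?_
    rw [dotProduct_smul, dotProduct_comm]
    simp only [smul_eq_mul, ha]; ring
  have h2s : v ⬝ᵥ (Sg * Sg).mulVec v = ∑ i, lam i ^ 2 * a i ^ 2 := by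
    rw [← mulVec_mulVec, hSx v]
    have hmv : Sg.mulVec (∑ i, (lam i * (q i ⬝ᵥ v)) • q i)
        = ∑ i, Sg.mulVec ((lam i * (q i ⬝ᵥ v)) • q i) := by
      simpa only [Matrix.mulVecLin_apply] using
        map_sum (Matrix.mulVecLin Sg) (fun i => (lam i * (q i ⬝ᵥ v)) • q i) Finset.univ
    rw [hmv]
    simp only [mulVec_smul]
    rw [dotProduct_sum'']
    refine Finset.sum_congr rfl fun i _ => ?_
    rw [hSq, dotProduct_smul, dotProduct_smul, dotProduct_comm]
    simp only [smul_eq_mul, ha]; ring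
  have hPar : v ⬝ᵥ v = ∑ i, a i ^ 2 := by
    set Q : Matrix (Fin d) (Fin d) ℝ := Matrix.of fun i j => q i j with hQdef
    have hQQ : Q * Qᵀ = 1 := by
      ext i j
      simp only [mul_apply, transpose_apply, one_apply, hQdef, of_apply]
      simpa [dotProduct] using horth i j
    have hQQ' : Qᵀ * Q = 1 := mul_eq_one_comm.mp hQQ
    have hQv : ∀ i, Q.mulVec v i = a i := by
      intro i
      simp [hQdef, mulVec, dotProduct, ha, mul_comm]
    calc v ⬝ᵥ v = v ⬝ᵥ (Qᵀ * Q).mulVec v := by rw [hQQ', one_mulVec]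
    _ = (Q.mulVec v) ⬝ᵥ (Q.mulVec v) := by
        rw [← mulVec_mulVec, mulVec_transpose, dotProduct_mulVec]
        exact dotProduct_comm _ _
    _ = ∑ i, a i ^ 2 := by
        simp only [dotProduct, hQv]
        exact Finset.sum_congr rfl fun i _ => (sq _).symm
  have hN : 0 < v ⬝ᵥ v := by
    rcases lt_or_eq_of_le (by positivity : (0:ℝ) ≤ ∑ i, a i ^ 2) with h | h
    · rw [hPar]; exact h
    · exact absurd (dotProduct_self_eq_zero.mp (by rw [hPar, ← h])) hv
  set N := v ⬝ᵥ v with hNdef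
  have hAle : a i0 ^ 2 ≤ N := by
    rw [hPar]
    exact Finset.single_le_sum (fun i _ => sq_nonneg (a i)) (Finset.mem_univ i0)
  have hT2 : ∑ i, lam i ^ 2 * a i ^ 2
      ≤ lam i0 ^ 2 * a i0 ^ 2 + lam i1 ^ 2 * (N - a i0 ^ 2) := by
    have hsplit : ∑ i, lam i ^ 2 * a i ^ 2
        = lam i0 ^ 2 * a i0 ^ 2 + ∑ i ∈ Finset.univ.erase i0, lam i ^ 2 * a i ^ 2 :=
      (Finset.add_sum_erase Finset.univ (fun i => lam i ^ 2 * a i ^ 2)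
        (Finset.mem_univ i0)).symm
    have hrest : ∑ i ∈ Finset.univ.erase i0, lam i ^ 2 * a i ^ 2
        ≤ ∑ i ∈ Finset.univ.erase i0, lam i1 ^ 2 * a i ^ 2 := by
      refine Finset.sum_le_sum fun i hi => ?_
      have hi0 : i ≠ i0 := Finset.ne_of_mem_erase hi
      have hle : i1 ≤ i := by
        rw [Fin.le_def, h1]
        have : (i : ℕ) ≠ 0 := by
          intro h; exact hi0 (Fin.ext (h.trans h0.symm))
        omega
      have hlam : lam i ≤ lam i1 := hantitone hle
      have hn := hnonneg i
      have hsq : lam i ^ 2 ≤ lam i1 ^ 2 := by nlinarith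
      exact mul_le_mul_of_nonneg_right hsq (sq_nonneg (a i))
    have hNr : ∑ i ∈ Finset.univ.erase i0, a i ^ 2 = N - a i0 ^ 2 := by
      have h2 := Finset.add_sum_erase Finset.univ (fun i => a i ^ 2) (Finset.mem_univ i0)
      rw [hPar, ← h2]; ring
    calc ∑ i, lam i ^ 2 * a i ^ 2
        ≤ lam i0 ^ 2 * a i0 ^ 2 + ∑ i ∈ Finset.univ.erase i0, lam i1 ^ 2 * a i ^ 2 := by
          rw [hsplit]; linarith
      _ = lam i0 ^ 2 * a i0 ^ 2 + lam i1 ^ 2 * (N - a i0 ^ 2) := by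
          rw [← Finset.mul_sum, hNr]
  have hT1 : lam i0 * a i0 ^ 2 ≤ ∑ i, lam i * a i ^ 2 :=
    Finset.single_le_sum (f := fun i => lam i * a i ^ 2)
      (fun i _ => mul_nonneg (hnonneg i) (sq_nonneg _)) (Finset.mem_univ i0)
  have hT1nn : 0 ≤ lam i0 * a i0 ^ 2 := mul_nonneg (hnonneg i0) (sq_nonneg _)
  set T1 := ∑ i, lam i * a i ^ 2 with hT1def
  set T2 := ∑ i, lam i ^ 2 * a i ^ 2 with hT2def
  have key : N * T2 - T1 ^ 2
      ≤ (N - a i0 ^ 2) * (a i0 ^ 2 * lam i0 ^ 2 + N * lam i1 ^ 2) := by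
    nlinarith [mul_le_mul_of_nonneg_left hT2 hN.le, mul_self_le_mul_self hT1nn hT1]
  constructor
  · rw [h1s, h2s]
    have e1 : T2 / N - (T1 / N) ^ 2 = (N * T2 - T1 ^ 2) / N ^ 2 := by
      field_simp
    have e2 : (1 - (v ⬝ᵥ q i0) ^ 2 / N) *
        ((1 - (1 - (v ⬝ᵥ q i0) ^ 2 / N)) * lam i0 ^ 2 + lam i1 ^ 2)
        = ((N - a i0 ^ 2) * (a i0 ^ 2 * lam i0 ^ 2 + N * lam i1 ^ 2)) / N ^ 2 := by
      show (1 - a i0 ^ 2 / N) * ((1 - (1 - a i0 ^ 2 / N)) * lam i0 ^ 2 + lam i1 ^ 2) = _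
      field_simp; ring
    rw [e1, e2]
    exact div_le_div_of_nonneg_right key (by positivity) |>.trans_eq rfl
  · have hΨ' : (v ⬝ᵥ q i0) ^ 2 / N ≤ 1 := (div_le_one hN).mpr hAle
    have hq2 : lam i1 ^ 2 ≤ lam i0 ^ 2 := by nlinarith [hnonneg i1, hnonneg i0]
    have hd2 : 0 ≤ (v ⬝ᵥ q i0) ^ 2 / N := by positivity
    have h5 : (v ⬝ᵥ q i0) ^ 2 / N * lam i0 ^ 2 + lam i1 ^ 2 ≤ 2 * lam i0 ^ 2 := by
      have := mul_le_mul_of_nonneg_right hΨ' (sq_nonneg (lam i0))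
      linarith
    nlinarith [mul_nonneg (sub_nonneg.mpr hΨ') (sub_nonneg.mpr h5)]

end RayleighAux

/-- Variance of the Rayleigh quotient of a PSD matrix is bounded by
`Ψ((1−Ψ)λ₁² + λ₂²) ≤ 2λ₁²Ψ`, where `Ψ` is the sine-squared error to the top
eigenvector. -/
theorem rayleigh_variance_bound
    {d : ℕ} (hd : 2 ≤ d)
    (Sg : Matrix (Fin d) (Fin d) ℝ)
    (lam : Fin d → ℝ) (q : Fin d → (Fin d → ℝ))
    (horth : ∀ i j, q i ⬝ᵥ q j = if i = j then (1 : ℝ) else 0)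
    (hdecomp : Sg = ∑ i, lam i • vecMulVec (q i) (q i))
    (hantitone : Antitone lam)
    (hnonneg : ∀ i, 0 ≤ lam i)
    (hgap : lam ⟨1, by omega⟩ < lam ⟨0, by omega⟩)
    (v : Fin d → ℝ) (hv : v ≠ 0) :
    (v ⬝ᵥ (Sg * Sg).mulVec v) / (v ⬝ᵥ v) - ((v ⬝ᵥ Sg.mulVec v) / (v ⬝ᵥ v)) ^ 2 ≤
      (1 - (v ⬝ᵥ q ⟨0, by omega⟩) ^ 2 / (v ⬝ᵥ v)) *
        ((1 - (1 - (v ⬝ᵥ q ⟨0, by omega⟩) ^ 2 / (v ⬝ᵥ v))) * lam ⟨0, by omega⟩ ^ 2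
          + lam ⟨1, by omega⟩ ^ 2) ∧
    (1 - (v ⬝ᵥ q ⟨0, by omega⟩) ^ 2 / (v ⬝ᵥ v)) *
        ((1 - (1 - (v ⬝ᵥ q ⟨0, by omega⟩) ^ 2 / (v ⬝ᵥ v))) * lam ⟨0, by omega⟩ ^ 2
          + lam ⟨1, by omega⟩ ^ 2) ≤
      2 * lam ⟨0, by omega⟩ ^ 2 * (1 - (v ⬝ᵥ q ⟨0, by omega⟩) ^ 2 / (v ⬝ᵥ v)) := by
  exact rayleigh_aux Sg lam q horth hdecomp hantitone hnonneg v hv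
    ⟨0, by omega⟩ ⟨1, by omega⟩ rfl rfl hgap
end

section
/- Let v_{t-1} ∈ R^d be nonzero and orthogonal to ξ_t ∈ R^d, let γ_t > 0, q* ∈ R^d a unit vector, and define v_t := v_{t-1} + γ_t ξ_t and Ψ_s := 1 − (v_sᵀq*)²/‖v_s‖² for s ∈ {t−1, t}. Then Ψ_t ≤ Ψ_{t-1} + γ_t²·‖ξ_t‖²/‖v_{t-1}‖² − 2γ_t·(v_{t-1}ᵀq*)(ξ_tᵀq*)/‖v_{t-1}‖². -/
open scoped RealInnerProductSpace

/-- One-step error recursion for Krasulina-type updates. -/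
theorem krasulina_error_recursion
    {d : ℕ} (v ξ qstar : EuclideanSpace ℝ (Fin d))
    (hv : v ≠ 0) (horth : ⟪v, ξ⟫ = 0) (hq : ‖qstar‖ = 1)
    (γ : ℝ) (hγ : 0 < γ) :
    1 - ⟪v + γ • ξ, qstar⟫ ^ 2 / ‖v + γ • ξ‖ ^ 2 ≤
      (1 - ⟪v, qstar⟫ ^ 2 / ‖v‖ ^ 2) + γ ^ 2 * ‖ξ‖ ^ 2 / ‖v‖ ^ 2
        - 2 * γ * (⟪v, qstar⟫ * ⟪ξ, qstar⟫) / ‖v‖ ^ 2 := by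
  have hV : (0:ℝ) < ‖v‖ ^ 2 := by
    have : ‖v‖ ≠ 0 := norm_ne_zero_iff.mpr hv
    positivity
  have hinner : ⟪v + γ • ξ, qstar⟫ = ⟪v, qstar⟫ + γ * ⟪ξ, qstar⟫ := by
    rw [inner_add_left, real_inner_smul_left]
  have hnorm : ‖v + γ • ξ‖ ^ 2 = ‖v‖ ^ 2 + γ ^ 2 * ‖ξ‖ ^ 2 := by
    rw [norm_add_sq_real, real_inner_smul_right, horth, norm_smul]
    simp [mul_pow]
  have hN : (0:ℝ) < ‖v + γ • ξ‖ ^ 2 := by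
    rw [hnorm]; nlinarith [sq_nonneg (γ * ‖ξ‖)]
  have hcs : ⟪v + γ • ξ, qstar⟫ ^ 2 ≤ ‖v + γ • ξ‖ ^ 2 := by
    have h := abs_real_inner_le_norm (v + γ • ξ) qstar
    rw [hq, mul_one] at h
    calc ⟪v + γ • ξ, qstar⟫ ^ 2 = |⟪v + γ • ξ, qstar⟫| ^ 2 := (sq_abs _).symm
      _ ≤ ‖v + γ • ξ‖ ^ 2 := by
        exact pow_le_pow_left₀ (abs_nonneg _) h 2
  rw [hnorm] at hcs hN
  rw [hinner] at hcs ⊢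
  rw [hnorm]
  set a := ⟪v, qstar⟫
  set b := ⟪ξ, qstar⟫
  set V := ‖v‖ ^ 2
  set X := ‖ξ‖ ^ 2
  have hX : (0:ℝ) ≤ X := sq_nonneg _
  have key : (a ^ 2 + 2 * γ * a * b - γ ^ 2 * X) * (V + γ ^ 2 * X) ≤ (a + γ * b) ^ 2 * V := by
    nlinarith [sq_nonneg (γ * b), mul_nonneg hX (sq_nonneg γ)]
  have h1 : (a + γ * b) ^ 2 / (V + γ ^ 2 * X) ≥ (a ^ 2 + 2 * γ * a * b - γ ^ 2 * X) / V := by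
    rw [ge_iff_le, div_le_div_iff₀ hV hN]
    linarith [key]
  have h2 : (1 - a ^ 2 / V) + γ ^ 2 * X / V - 2 * γ * (a * b) / V = 1 - (a ^ 2 + 2 * γ * a * b - γ ^ 2 * X) / V := by
    field_simp
    ring
  rw [h2]
  linarith [h1]
end
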